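/- Let h, s be positive integers. Assume that for every finite subset T ⊆ R with |T| ≤ h − 1 the family (ι_R(v))_{v∈T} is linearly independent over F, and for every finite subset T ⊆ L with |T| ≤ s − 1 the family (ι_L(u))_{u∈T} is linearly independent over F. Let W ⊆ L × R be a finite set and let c : W → F satisfy c(e) ≠ 0 for every e ∈ W and Σ_{e∈W} c(e)·w_e = 0. Then every u ∈ L that occurs as the first coordinate of some pair in W satisfies |{v ∈ R : (u,v) ∈ W}| ≥ h, and every v ∈ R that occurs as the second coordinate of some pair in W satisfies |{u ∈ L : (u,v) ∈ W}| ≥ s. -/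

import Mathlib

/-!
Reading the block of `∑ c e • w_e` at a left vertex `u` gives `∑_{(u,v) ∈ W} c(u,v) • ι_R v = 0`,
a vanishing combination of the vectors `ι_R v` over the neighbours `v` of `u` with nonzero
coefficients. Fewer than `h` neighbours would make this family linearly independent. Swapping
the roles of `L` and `R` gives the bound at right vertices.
-/

/-- The edge vector `w_e` for `e = (u, v)`: its block indexed by the left vertex `u`
equals `ιR v`, its block indexed by the right vertex `v` equals `ιL u`,
and all other blocks are zero. -/
def wvec {F L R B : Type*} [Zero F] [DecidableEq L] [DecidableEq R]
    (ιL : L → B → F) (ιR : R → B → F) (e : L × R) : (L ⊕ R) × B → F :=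
  fun x =>
    match x with
    | (Sum.inl u', b) => if u' = e.1 then ιR e.2 b else 0
    | (Sum.inr v', b) => if v' = e.2 then ιL e.1 b else 0

open Finset

theorem le_card_of_sum_smul_eq_zero {K ι M : Type*} [Ring K] [AddCommGroup M]
    [Module K M] (v : ι → M) (h : ℕ)
    (hind : ∀ T : Finset ι, T.card ≤ h - 1 → LinearIndepOn K v (T : Set ι))
    {S : Finset ι} {g : ι → K} (hsum : ∑ i ∈ S, g i • v i = 0)
    {i : ι} (hi : i ∈ S) (hgi : g i ≠ 0) : h ≤ S.card := by
  by_contra! hlt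
  exact hgi (linearIndepOn_finset_iff.mp (hind S (Nat.le_pred_of_lt hlt)) g hsum i hi)

theorem injOn_snd_filter_fst_eq {L R : Type*} [DecidableEq L] (W : Finset (L × R)) (u : L) :
    Set.InjOn Prod.snd (W.filter fun e => e.1 = u : Set (L × R)) := fun _ hx _ hy hxy =>
  Prod.ext ((mem_filter.mp hx).2.trans (mem_filter.mp hy).2.symm) hxy

section EdgeVectors

variable {F L R B : Type*} [Semiring F] [DecidableEq L] [DecidableEq R]
  (ιL : L → B → F) (ιR : R → B → F)

theorem wvec_swap (e : L × R) (x : (L ⊕ R) × B) :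
    wvec ιR ιL e.swap (x.1.swap, x.2) = wvec ιL ιR e x := by
  obtain ⟨_ | _, _⟩ := x <;> rfl

theorem sum_smul_wvec_inl (W : Finset (L × R)) (c : L × R → F) (u : L) :
    (fun b => (∑ e ∈ W, c e • wvec ιL ιR e) (Sum.inl u, b))
      = ∑ v ∈ (W.filter fun e => e.1 = u).image Prod.snd, c (u, v) • ιR v := by
  rw [sum_image (injOn_snd_filter_fst_eq W u), sum_filter]
  ext b
  simp only [Finset.sum_apply, Pi.smul_apply, smul_eq_mul, wvec]
  refine sum_congr rfl fun e _ => ?_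
  by_cases he : e.1 = u
  · subst he; simp
  · simp [he, Ne.symm he]

theorem sum_smul_wvec_map_prodComm (W : Finset (L × R)) (c : L × R → F) :
    ∑ e ∈ W.map (Equiv.prodComm L R).toEmbedding, c e.swap • wvec ιR ιL e
      = fun x => (∑ e ∈ W, c e • wvec ιL ιR e) (x.1.swap, x.2) := by
  ext x
  simp only [sum_map, Finset.sum_apply, Pi.smul_apply]
  refine sum_congr rfl fun e _ => ?_
  rw [← wvec_swap ιL ιR e (x.1.swap, x.2)]
  simp

end EdgeVectors

theorem le_card_filter_fst_of_sum_smul_wvec_eq_zero {F L R B : Type*} [Ring F]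
    [DecidableEq L] [DecidableEq R] (ιL : L → B → F) (ιR : R → B → F) (h : ℕ)
    (hindR : ∀ T : Finset R, T.card ≤ h - 1 → LinearIndepOn F ιR (T : Set R))
    {W : Finset (L × R)} {c : L × R → F} (hc : ∀ e ∈ W, c e ≠ 0)
    (hsum : ∑ e ∈ W, c e • wvec ιL ιR e = 0) {u : L} (hu : ∃ v, (u, v) ∈ W) :
    h ≤ (W.filter fun e => e.1 = u).card := by
  obtain ⟨v, hv⟩ := hu
  have hblock := congrArg (fun f b => f (Sum.inl u, b)) hsum
  simp only [sum_smul_wvec_inl] at hblock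
  rw [← card_image_of_injOn (injOn_snd_filter_fst_eq W u)]
  exact le_card_of_sum_smul_eq_zero ιR h hindR hblock
    (mem_image_of_mem Prod.snd (mem_filter.mpr ⟨hv, rfl⟩)) (hc _ hv)

theorem stmt3 {F L R B : Type*} [Field F] [DecidableEq L] [DecidableEq R]
    (ιL : L → B → F) (ιR : R → B → F)
    (h s : ℕ)
    (hindR : ∀ T : Finset R, T.card ≤ h - 1 →
      LinearIndependent F (fun v : T => ιR v))
    (hindL : ∀ T : Finset L, T.card ≤ s - 1 →
      LinearIndependent F (fun u : T => ιL u))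
    (W : Finset (L × R)) (c : L × R → F)
    (hc : ∀ e ∈ W, c e ≠ 0)
    (hsum : ∑ e ∈ W, c e • wvec ιL ιR e = 0) :
    (∀ u : L, (∃ v, (u, v) ∈ W) → h ≤ (W.filter fun e => e.1 = u).card) ∧
    (∀ v : R, (∃ u, (u, v) ∈ W) → s ≤ (W.filter fun e => e.2 = v).card) := by
  refine ⟨fun u hu => le_card_filter_fst_of_sum_smul_wvec_eq_zero ιL ιR h hindR hc hsum hu,
    fun v ⟨u, hu⟩ => ?_⟩
  have hswap := le_card_filter_fst_of_sum_smul_wvec_eq_zero ιR ιL s hindL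
    (W := W.map (Equiv.prodComm L R).toEmbedding) (c := fun e : R × L => c e.swap)
    (fun _ he => hc _ (mem_map_equiv.mp he))
    (by rw [sum_smul_wvec_map_prodComm, hsum]; rfl) ⟨u, by simpa using hu⟩
  rwa [filter_map, card_map] at hswap
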